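/- Let Θ* be a real symmetric positive definite p×p matrix, let M > 2 be a constant, and let Δ be a real symmetric p×p matrix with ‖Δ‖_{F*}² ≤ 1/(2M²). Then Θ* + Δ is positive definite and the first-order Taylor remainder of the Gaussian negative log-likelihood satisfies δL(Δ; Θ*) := Tr(Θ*⁻¹Δ) − log det(Θ* + Δ) + log det(Θ*) ≥ ((M−2)/(2(M−1))) · ‖Δ‖_{F*}². -/

import Mathlib

/-!
Whiten the perturbation: with `R = Θ^{-1/2}` and `S = R Δ R` (symmetric) one has
`Tr(Θ⁻¹Δ) = Tr S`, `‖Δ‖_{F*}² = Tr S²` and `det(Θ + Δ) = det Θ · det(1 + S)`, so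
`δL(Δ; Θ) = ∑ᵢ (μᵢ - log(1 + μᵢ))` over the eigenvalues `μᵢ` of `S`.
Each `|μᵢ| ≤ ‖S‖_F ≤ 1/M`, and on `(-1, r]` the scalar bound
`x - log(1 + x) ≥ x² / (2(1 + r))` holds, which after summing gives
`δL ≥ Tr S² / (2(1 + 1/M)) ≥ (M-2)/(2(M-1)) · Tr S²`.
-/

open Matrix

namespace Real

lemma hasDerivAt_sub_log_one_add_sub_sq_div {r y : ℝ} (hy : -1 < y) :
    HasDerivAt (fun x => x - log (1 + x) - x ^ 2 / (2 * (1 + r)))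
      (y / (1 + y) - y / (1 + r)) y := by
  have h1 : (1 : ℝ) + y ≠ 0 := by linarith
  refine (((hasDerivAt_id' y).sub (((hasDerivAt_id' y).const_add 1).log h1)).sub
    ((hasDerivAt_pow 2 y).div_const (2 * (1 + r)))).congr_deriv ?_
  field_simp
  ring

lemma sq_div_le_sub_log_one_add {r x : ℝ} (hr : 0 ≤ r) (hx : -1 < x) (hxr : x ≤ r) :
    x ^ 2 / (2 * (1 + r)) ≤ x - log (1 + x) := by
  set g : ℝ → ℝ := fun x => x - log (1 + x) - x ^ 2 / (2 * (1 + r))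
  have hg : ∀ y, -1 < y → HasDerivAt g (y / (1 + y) - y / (1 + r)) y :=
    fun y hy => hasDerivAt_sub_log_one_add_sub_sq_div hy
  have hcont : ∀ a b, -1 < a → ContinuousOn g (Set.Icc a b) := fun a b ha y hy =>
    (hg y (by linarith [hy.1])).continuousAt.continuousWithinAt
  -- `g' y = y (r - y) / ((1 + y) (1 + r))` has the sign of `y` on `(-1, r)`
  have hg' : ∀ y ∈ Set.Ioo (-1) r, 0 ≤ y * (y / (1 + y) - y / (1 + r)) := fun y hy => by
    have h1 : 0 < 1 + y := by linarith [hy.1]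
    have h2 : y / (1 + y) - y / (1 + r) = y * (r - y) / ((1 + y) * (1 + r)) := by
      field_simp
      ring
    rw [h2, ← mul_div_assoc, ← mul_assoc, ← sq]
    exact div_nonneg (mul_nonneg (sq_nonneg y) (by linarith [hy.2])) (by positivity)
  suffices g 0 ≤ g x by simpa [g] using this
  rcases le_total 0 x with hx0 | hx0
  · refine monotoneOn_of_hasDerivWithinAt_nonneg (convex_Icc 0 r)
      (hcont 0 r (by norm_num)) (fun y hy => (hg y ?_).hasDerivWithinAt)
      (fun y hy => ?_) ⟨le_rfl, hr⟩ ⟨hx0, hxr⟩ hx0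
    all_goals rw [interior_Icc] at hy
    · linarith [hy.1]
    · exact nonneg_of_mul_nonneg_right (hg' y ⟨by linarith [hy.1], hy.2⟩) hy.1
  · refine antitoneOn_of_hasDerivWithinAt_nonpos (convex_Icc x 0)
      (hcont x 0 hx) (fun y hy => (hg y ?_).hasDerivWithinAt)
      (fun y hy => ?_) ⟨le_rfl, hx0⟩ ⟨hx0, le_rfl⟩ hx0
    all_goals rw [interior_Icc] at hy
    · linarith [hy.1]
    · exact nonpos_of_mul_nonneg_right (hg' y ⟨by linarith [hy.1], by linarith [hy.2]⟩) hy.2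

end Real

namespace Matrix

section Whitening

variable {n α : Type*} [Fintype n] [DecidableEq n] [CommRing α] {Θ R : Matrix n n α}

lemma inv_eq_mul_self_of_mul_self_mul_eq_one (h : R * R * Θ = 1) : Θ⁻¹ = R * R :=
  inv_eq_left_inv h

lemma mul_mul_eq_one_of_mul_self_mul_eq_one (h : R * R * Θ = 1) : R * Θ * R = 1 :=
  mul_eq_one_comm.mp (by rwa [← mul_assoc])

variable (Δ : Matrix n n α)

lemma trace_inv_mul_eq_trace_mul_mul (h : R * R * Θ = 1) :
    (Θ⁻¹ * Δ).trace = (R * Δ * R).trace := by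
  rw [inv_eq_mul_self_of_mul_self_mul_eq_one h, (trace_mul_cycle R Δ R).symm]

lemma trace_inv_mul_inv_mul_eq_trace_sq (h : R * R * Θ = 1) :
    (Θ⁻¹ * Δ * Θ⁻¹ * Δ).trace = (R * Δ * R * (R * Δ * R)).trace := by
  rw [inv_eq_mul_self_of_mul_self_mul_eq_one h]
  simp only [mul_assoc]
  rw [trace_mul_comm]
  simp only [mul_assoc]

lemma mul_add_mul_eq_one_add (h : R * R * Θ = 1) :
    R * (Θ + Δ) * R = 1 + R * Δ * R := by
  rw [mul_add, add_mul, mul_mul_eq_one_of_mul_self_mul_eq_one h]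

lemma det_add_eq_det_mul_det_one_add (h : R * R * Θ = 1) :
    (Θ + Δ).det = Θ.det * (1 + R * Δ * R).det := by
  have hdet : R.det * R.det * Θ.det = 1 := by rw [← det_mul, ← det_mul, h, det_one]
  rw [← mul_add_mul_eq_one_add Δ h, det_mul, det_mul]
  linear_combination (-(Θ + Δ).det) * hdet

end Whitening

section PosDef

open scoped ComplexOrder MatrixOrder

variable {n 𝕜 : Type*} [Fintype n] [DecidableEq n] [RCLike 𝕜] {Θ R : Matrix n n 𝕜}

lemma PosDef.exists_isHermitian_mul_self_mul_eq_one (hΘ : Θ.PosDef) :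
    ∃ R : Matrix n n 𝕜, R.IsHermitian ∧ R * R * Θ = 1 := by
  have hΘinv : (0 : Matrix n n 𝕜) ≤ Θ⁻¹ := nonneg_iff_posSemidef.mpr hΘ.inv.posSemidef
  refine ⟨CFC.sqrt Θ⁻¹, (nonneg_iff_posSemidef.mp (CFC.sqrt_nonneg _)).isHermitian, ?_⟩
  rw [CFC.sqrt_mul_sqrt_self _ hΘinv, nonsing_inv_mul _ ((isUnit_iff_isUnit_det Θ).mp hΘ.isUnit)]

lemma posDef_add_iff_posDef_one_add (hR : R.IsHermitian) (h : R * R * Θ = 1)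
    (Δ : Matrix n n 𝕜) : (Θ + Δ).PosDef ↔ (1 + R * Δ * R).PosDef := by
  have hRunit : IsUnit R := IsUnit.of_mul_eq_one (R * Θ) (by rwa [← mul_assoc])
  have hRstar : star R = R := hR.eq
  rw [← mul_add_mul_eq_one_add Δ h, ← hRunit.posDef_star_left_conjugate_iff (x := Θ + Δ),
    hRstar]

end PosDef

end Matrix

namespace Matrix.IsHermitian

section FunctionalCalculus

variable {n 𝕜 : Type*} [Fintype n] [DecidableEq n] [RCLike 𝕜] {S : Matrix n n 𝕜}

lemma trace_cfc (hS : S.IsHermitian) (f : ℝ → ℝ) :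
    (cfc f S).trace = ∑ i, (f (hS.eigenvalues i) : 𝕜) := by
  rw [hS.cfc_eq, IsHermitian.cfc, Unitary.conjStarAlgAut_apply, trace_mul_cycle,
    Unitary.coe_star_mul_self, one_mul, trace_diagonal]
  rfl

lemma det_cfc (hS : S.IsHermitian) (f : ℝ → ℝ) :
    (cfc f S).det = ∏ i, (f (hS.eigenvalues i) : 𝕜) := by
  simp [hS.cfc_eq, IsHermitian.cfc, -Unitary.conjStarAlgAut_apply]

open scoped ComplexOrder in
lemma posDef_cfc (hS : S.IsHermitian) {f : ℝ → ℝ} (hf : ∀ i, 0 < f (hS.eigenvalues i)) :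
    (cfc f S).PosDef := by
  rw [hS.cfc_eq, IsHermitian.cfc, Unitary.conjStarAlgAut_apply,
    Unitary.isUnit_coe.posDef_star_right_conjugate_iff, posDef_diagonal_iff]
  simpa using hf

end FunctionalCalculus

variable {n : Type*} [Fintype n] [DecidableEq n] {S : Matrix n n ℝ}

lemma trace_mul_self_eq_sum_sq (hS : S.IsHermitian) :
    (S * S).trace = ∑ i, hS.eigenvalues i ^ 2 := by
  rw [← sq, ← cfc_pow_id (R := ℝ) S 2, hS.trace_cfc]
  rfl

lemma one_add_eq_cfc (hS : S.IsHermitian) : 1 + S = cfc (fun x : ℝ => 1 + x) S := by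
  rw [cfc_const_add 1 (fun x : ℝ => x) S, cfc_id' ℝ S, map_one]

lemma sq_eigenvalues_le_trace_mul_self (hS : S.IsHermitian) (i : n) :
    hS.eigenvalues i ^ 2 ≤ (S * S).trace := by
  rw [hS.trace_mul_self_eq_sum_sq]
  exact Finset.single_le_sum (fun j _ => sq_nonneg (hS.eigenvalues j)) (Finset.mem_univ i)

lemma abs_eigenvalues_le_of_trace_mul_self_le (hS : S.IsHermitian) {r : ℝ} (hr : 0 ≤ r)
    (h : (S * S).trace ≤ r ^ 2) (i : n) : |hS.eigenvalues i| ≤ r :=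
  abs_le_of_sq_le_sq ((hS.sq_eigenvalues_le_trace_mul_self i).trans h) hr

lemma posDef_one_add_of_trace_mul_self_lt_one (hS : S.IsHermitian) (h : (S * S).trace < 1) :
    (1 + S).PosDef := by
  rw [hS.one_add_eq_cfc]
  exact hS.posDef_cfc fun i => by nlinarith [hS.sq_eigenvalues_le_trace_mul_self i]

lemma trace_mul_self_div_le_trace_sub_log_det_one_add (hS : S.IsHermitian) {r : ℝ}
    (hr : 0 ≤ r) (hr1 : r < 1) (h : (S * S).trace ≤ r ^ 2) :
    (S * S).trace / (2 * (1 + r)) ≤ S.trace - Real.log (1 + S).det := by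
  have hμ := hS.abs_eigenvalues_le_of_trace_mul_self_le hr h
  rw [hS.trace_mul_self_eq_sum_sq, hS.trace_eq_sum_eigenvalues, hS.one_add_eq_cfc, hS.det_cfc,
    Real.log_prod fun i _ => ?_, Finset.sum_div, ← Finset.sum_sub_distrib]
  · exact Finset.sum_le_sum fun i _ => Real.sq_div_le_sub_log_one_add hr
      (by linarith [(abs_le.mp (hμ i)).1]) (le_of_abs_le (hμ i))
  · simp only [RCLike.ofReal_real_eq_id, id]
    linarith [(abs_le.mp (hμ i)).1]

end Matrix.IsHermitian

theorem stmt_7_general (p : ℕ) (Θ : Matrix (Fin p) (Fin p) ℝ) (hΘ : Θ.PosDef)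
    (Δ : Matrix (Fin p) (Fin p) ℝ) (hΔ : Δ.IsSymm) (M : ℝ) (hM : 2 < M)
    (hball : Matrix.trace (Θ⁻¹ * Δ * Θ⁻¹ * Δ) ≤ 1 / (2 * M ^ 2)) :
    (Θ + Δ).PosDef ∧
      Matrix.trace (Θ⁻¹ * Δ) - Real.log ((Θ + Δ).det) + Real.log (Θ.det) ≥
        ((M - 2) / (2 * (M - 1))) * Matrix.trace (Θ⁻¹ * Δ * Θ⁻¹ * Δ) := by
  obtain ⟨R, hR, hRΘ⟩ := hΘ.exists_isHermitian_mul_self_mul_eq_one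
  rw [trace_inv_mul_inv_mul_eq_trace_sq Δ hRΘ] at hball ⊢
  rw [posDef_add_iff_posDef_one_add hR hRΘ, trace_inv_mul_eq_trace_mul_mul Δ hRΘ,
    det_add_eq_det_mul_det_one_add Δ hRΘ]
  set S := R * Δ * R
  have hS : S.IsHermitian := by
    simpa only [hR.eq] using isHermitian_conjTranspose_mul_mul R (hΔ : Δ.IsHermitian)
  have hM' : 0 < M := by linarith
  have hr1 : 1 / M < 1 := (div_lt_one hM').mpr (by linarith)
  have hSS : (S * S).trace ≤ (1 / M) ^ 2 :=
    hball.trans (by rw [div_pow, one_pow]; gcongr; nlinarith)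
  have h1S := hS.posDef_one_add_of_trace_mul_self_lt_one
    (hSS.trans_lt (pow_lt_one₀ (by positivity) hr1 two_ne_zero))
  refine ⟨h1S, ?_⟩
  rw [Real.log_mul hΘ.det_pos.ne' h1S.det_pos.ne']
  have hcoef : (M - 2) / (2 * (M - 1)) ≤ 1 / (2 * (1 + 1 / M)) := by
    rw [div_le_div_iff₀ (by linarith) (by positivity)]
    field_simp
    nlinarith
  have ht : 0 ≤ (S * S).trace := hS.trace_mul_self_eq_sum_sq ▸ by positivity
  calc (M - 2) / (2 * (M - 1)) * (S * S).trace
      ≤ 1 / (2 * (1 + 1 / M)) * (S * S).trace := by gcongr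
    _ = (S * S).trace / (2 * (1 + 1 / M)) := one_div_mul_eq_div _ _
    _ ≤ _ := hS.trace_mul_self_div_le_trace_sub_log_det_one_add (by positivity) hr1 hSS
    _ = _ := by ring

/-- Let `Θ*` be symmetric positive definite, `M > 2`, and `Δ` symmetric
with Fisher norm `‖Δ‖_{F*}² = Tr(Θ*⁻¹ Δ Θ*⁻¹ Δ) ≤ 1/(2M²)`.  Then `Θ* + Δ` is positive
definite and the first-order Taylor remainder of the Gaussian negative log-likelihood
satisfies `δL(Δ; Θ*) ≥ ((M-2)/(2(M-1))) ‖Δ‖_{F*}²`. -/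
theorem stmt_7 (p : ℕ) (Θ : Matrix (Fin p) (Fin p) ℝ) (hΘsymm : Θ.IsSymm) (hΘ : Θ.PosDef)
    (Δ : Matrix (Fin p) (Fin p) ℝ) (hΔ : Δ.IsSymm) (M : ℝ) (hM : 2 < M)
    (hball : Matrix.trace (Θ⁻¹ * Δ * Θ⁻¹ * Δ) ≤ 1 / (2 * M ^ 2)) :
    (Θ + Δ).PosDef ∧
      Matrix.trace (Θ⁻¹ * Δ) - Real.log ((Θ + Δ).det) + Real.log (Θ.det) ≥
        ((M - 2) / (2 * (M - 1))) * Matrix.trace (Θ⁻¹ * Δ * Θ⁻¹ * Δ) :=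
  stmt_7_general p Θ hΘ Δ hΔ M hM hball
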